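/- Fix reals T₀, T₁, T₂, T₃ ∈ (π, 2π) and Q₁, Q₂, Q₃ with 0 < Q_k − T_a < π for all a ∈ {0,1,2,3} and k ∈ {1,2,3}. Set T = max_a T_a, M = min(2π, Q₁, Q₂, Q₃), and g(x) = (sin(2π−x)·sin(Q₁−x)·sin(Q₂−x)·sin(Q₃−x)) / (sin(x−T₀)·sin(x−T₁)·sin(x−T₂)·sin(x−T₃)). Then there exists a unique z₀ ∈ (T, M) such that g(z₀) = 1. -/
import Mathlib


open Real Filter Finset

/-- The function `g(x) = (sin(2π−x) sin(Q₁−x) sin(Q₂−x) sin(Q₃−x)) /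
(sin(x−T₀) sin(x−T₁) sin(x−T₂) sin(x−T₃))` (here `Q 0, Q 1, Q 2` play the roles of
`Q₁, Q₂, Q₃`). -/
noncomputable def gfun (T : Fin 4 → ℝ) (Q : Fin 3 → ℝ) (x : ℝ) : ℝ :=
  (Real.sin (2 * Real.pi - x) * Real.sin (Q 0 - x) * Real.sin (Q 1 - x) *
      Real.sin (Q 2 - x)) /
    (Real.sin (x - T 0) * Real.sin (x - T 1) * Real.sin (x - T 2) * Real.sin (x - T 3))

/-- `T = max_a T_a`. -/
noncomputable def Tmax (T : Fin 4 → ℝ) : ℝ := max (max (T 0) (T 1)) (max (T 2) (T 3))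

/-- `M = min(2π, Q₁, Q₂, Q₃)`. -/
noncomputable def Mmin (Q : Fin 3 → ℝ) : ℝ := min (2 * Real.pi) (min (Q 0) (min (Q 1) (Q 2)))

open Topology in
lemma sin_ratio_lt (A B x y : ℝ) (hyx : 0 < Real.sin (y - x))
    (hx : 0 < Real.sin (x - B)) (hy : 0 < Real.sin (y - B))
    (hAB : 0 < Real.sin (A - B)) :
    Real.sin (A - y) / Real.sin (y - B) < Real.sin (A - x) / Real.sin (x - B) := by
  rw [div_lt_div_iff₀ hy hx]
  have key : Real.sin (A - x) * Real.sin (y - B) - Real.sin (A - y) * Real.sin (x - B)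
      = Real.sin (A - B) * Real.sin (y - x) := by
    simp only [Real.sin_sub]; ring
  nlinarith [mul_pos hAB hyx]

/-- numerator of `gfun` -/
noncomputable def numf (Q : Fin 3 → ℝ) (x : ℝ) : ℝ :=
  Real.sin (2 * Real.pi - x) * Real.sin (Q 0 - x) * Real.sin (Q 1 - x) * Real.sin (Q 2 - x)

/-- denominator of `gfun` -/
noncomputable def denf (T : Fin 4 → ℝ) (x : ℝ) : ℝ :=
  Real.sin (x - T 0) * Real.sin (x - T 1) * Real.sin (x - T 2) * Real.sin (x - T 3)

lemma gfun_eq (T : Fin 4 → ℝ) (Q : Fin 3 → ℝ) (x : ℝ) :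
    gfun T Q x = numf Q x / denf T x := rfl

lemma numf_continuous (Q : Fin 3 → ℝ) : Continuous (numf Q) := by
  unfold numf; fun_prop

lemma denf_continuous (T : Fin 4 → ℝ) : Continuous (denf T) := by
  unfold denf; fun_prop

open Topology

/-- for `T₀,…,T₃ ∈ (π,2π)` and `Q₁,Q₂,Q₃` with `0 < Q_k − T_a < π` for all `a,k`,
there is a unique `z₀ ∈ (T, M)` with `g(z₀) = 1`. -/
theorem exists_unique_critical_point (T : Fin 4 → ℝ) (Q : Fin 3 → ℝ)
    (hT : ∀ a, T a ∈ Set.Ioo Real.pi (2 * Real.pi))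
    (hQT : ∀ (k : Fin 3) (a : Fin 4), Q k - T a ∈ Set.Ioo 0 Real.pi) :
    ∃! z₀ : ℝ, z₀ ∈ Set.Ioo (Tmax T) (Mmin Q) ∧ gfun T Q z₀ = 1 := by
  set t := Tmax T with ht
  set m := Mmin Q with hm
  -- t is attained
  obtain ⟨a0, ha0⟩ : ∃ a : Fin 4, t = T a := by
    rw [ht]; unfold Tmax
    rcases max_cases (max (T 0) (T 1)) (max (T 2) (T 3)) with ⟨h, -⟩ | ⟨h, -⟩ <;> rw [h]
    · rcases max_cases (T 0) (T 1) with ⟨h', -⟩ | ⟨h', -⟩ <;> rw [h'] <;> exact ⟨_, rfl⟩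
    · rcases max_cases (T 2) (T 3) with ⟨h', -⟩ | ⟨h', -⟩ <;> rw [h'] <;> exact ⟨_, rfl⟩
  have hm0 : m = 2 * Real.pi ∨ ∃ k : Fin 3, m = Q k := by
    rw [hm]; unfold Mmin
    rcases min_cases (2 * Real.pi) (min (Q 0) (min (Q 1) (Q 2))) with ⟨h, -⟩ | ⟨h, -⟩ <;> rw [h]
    · exact Or.inl rfl
    · rcases min_cases (Q 0) (min (Q 1) (Q 2)) with ⟨h', -⟩ | ⟨h', -⟩ <;> rw [h']
      · exact Or.inr ⟨0, rfl⟩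
      · rcases min_cases (Q 1) (Q 2) with ⟨h'', -⟩ | ⟨h'', -⟩ <;> rw [h'']
        · exact Or.inr ⟨1, rfl⟩
        · exact Or.inr ⟨2, rfl⟩
  have hTa : ∀ a, T a ≤ t := by
    intro a; rw [ht]; unfold Tmax; fin_cases a
    · exact le_max_of_le_left (le_max_left _ _)
    · exact le_max_of_le_left (le_max_right _ _)
    · exact le_max_of_le_right (le_max_left _ _)
    · exact le_max_of_le_right (le_max_right _ _)
  have hm2 : m ≤ 2 * Real.pi := min_le_left _ _
  have hmQ : ∀ k, m ≤ Q k := by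
    intro k; rw [hm]; unfold Mmin; fin_cases k
    · exact le_trans (min_le_right _ _) (min_le_left _ _)
    · exact le_trans (min_le_right _ _) (le_trans (min_le_right _ _) (min_le_left _ _))
    · exact le_trans (min_le_right _ _) (le_trans (min_le_right _ _) (min_le_right _ _))
  have htm : t < m := by
    rw [hm, ha0]; unfold Mmin
    exact lt_min (hT a0).2 (lt_min (by linarith [(hQT 0 a0).1])
      (lt_min (by linarith [(hQT 1 a0).1]) (by linarith [(hQT 2 a0).1])))
  have htπ : Real.pi < t := ha0 ▸ (hT a0).1
  -- denominator factors positive on Ioc t m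
  have hden : ∀ x ∈ Set.Ioc t m, ∀ a, 0 < Real.sin (x - T a) := by
    intro x hx a
    apply Real.sin_pos_of_pos_of_lt_pi
    · have := hTa a; linarith [hx.1]
    · have h1 := (hQT 0 a).2; have h2 := hmQ 0; linarith [hx.2]
  -- numerator factors positive on Ico t m
  have hnum2 : ∀ x ∈ Set.Ico t m, 0 < Real.sin (2 * Real.pi - x) := by
    intro x hx
    apply Real.sin_pos_of_pos_of_lt_pi
    · linarith [hx.2]
    · linarith [hx.1]
  have hnumQ : ∀ x ∈ Set.Ico t m, ∀ k, 0 < Real.sin (Q k - x) := by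
    intro x hx k
    apply Real.sin_pos_of_pos_of_lt_pi
    · linarith [hx.2, hmQ k]
    · have h1 := (hQT k a0).2
      have h2 : T a0 ≤ x := ha0 ▸ hx.1
      linarith
  -- strict antitonicity
  have hanti : StrictAntiOn (gfun T Q) (Set.Ioo t m) := by
    intro x hx y hy hxy
    have hprod : ∀ z : ℝ, gfun T Q z =
        (Real.sin (2 * Real.pi - z) / Real.sin (z - T 0)) *
        (Real.sin (Q 0 - z) / Real.sin (z - T 1)) *
        (Real.sin (Q 1 - z) / Real.sin (z - T 2)) *
        (Real.sin (Q 2 - z) / Real.sin (z - T 3)) := by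
      intro z
      rw [gfun, div_mul_div_comm, div_mul_div_comm, div_mul_div_comm]
    have hyx : 0 < Real.sin (y - x) := by
      apply Real.sin_pos_of_pos_of_lt_pi (by linarith)
      have h1 := (hQT 0 a0).2
      have h2 := hmQ 0
      have h3 : T a0 < x := ha0 ▸ hx.1
      linarith [hy.2]
    have hdx := fun a => hden x ⟨hx.1, hx.2.le⟩ a
    have hdy := fun a => hden y ⟨hy.1, hy.2.le⟩ a
    have hAB0 : 0 < Real.sin (2 * Real.pi - T 0) :=
      Real.sin_pos_of_pos_of_lt_pi (by linarith [(hT 0).2]) (by linarith [(hT 0).1])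
    have hABk : ∀ (k : Fin 3) (a : Fin 4), 0 < Real.sin (Q k - T a) := fun k a =>
      Real.sin_pos_of_pos_of_lt_pi (hQT k a).1 (hQT k a).2
    have h0 := sin_ratio_lt (2 * Real.pi) (T 0) x y hyx (hdx 0) (hdy 0) hAB0
    have h1 := sin_ratio_lt (Q 0) (T 1) x y hyx (hdx 1) (hdy 1) (hABk 0 1)
    have h2 := sin_ratio_lt (Q 1) (T 2) x y hyx (hdx 2) (hdy 2) (hABk 1 2)
    have h3 := sin_ratio_lt (Q 2) (T 3) x y hyx (hdx 3) (hdy 3) (hABk 2 3)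
    have hny2 := hnum2 y ⟨hy.1.le, hy.2⟩
    have hnyQ := fun k => hnumQ y ⟨hy.1.le, hy.2⟩ k
    rw [hprod x, hprod y]
    have p0 : (0:ℝ) ≤ Real.sin (2 * Real.pi - y) / Real.sin (y - T 0) :=
      (div_pos hny2 (hdy 0)).le
    have p1 : (0:ℝ) ≤ Real.sin (Q 0 - y) / Real.sin (y - T 1) :=
      (div_pos (hnyQ 0) (hdy 1)).le
    have p2 : (0:ℝ) ≤ Real.sin (Q 1 - y) / Real.sin (y - T 2) :=
      (div_pos (hnyQ 1) (hdy 2)).le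
    have p3 : (0:ℝ) ≤ Real.sin (Q 2 - y) / Real.sin (y - T 3) :=
      (div_pos (hnyQ 2) (hdy 3)).le
    have q01 : Real.sin (2 * Real.pi - y) / Real.sin (y - T 0) *
        (Real.sin (Q 0 - y) / Real.sin (y - T 1)) <
        Real.sin (2 * Real.pi - x) / Real.sin (x - T 0) *
        (Real.sin (Q 0 - x) / Real.sin (x - T 1)) := mul_lt_mul'' h0 h1 p0 p1
    have q012 := mul_lt_mul'' q01 h2 (mul_nonneg p0 p1) p2
    exact mul_lt_mul'' q012 h3 (mul_nonneg (mul_nonneg p0 p1) p2) p3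
  have hnumT : 0 < numf Q t := by
    have h1 := hnum2 t ⟨le_refl t, htm⟩
    have h2 := fun k => hnumQ t ⟨le_refl t, htm⟩ k
    exact mul_pos (mul_pos (mul_pos h1 (h2 0)) (h2 1)) (h2 2)
  have hdenT : denf T t = 0 := by
    have h0 : Real.sin (t - T a0) = 0 := by rw [ha0, sub_self, Real.sin_zero]
    have hcase : a0 = 0 ∨ a0 = 1 ∨ a0 = 2 ∨ a0 = 3 := by omega
    rcases hcase with h | h | h | h <;> rw [h] at h0 <;> simp [denf, h0]
  have hdenpos : ∀ x ∈ Set.Ioc t m, 0 < denf T x := by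
    intro x hx
    exact mul_pos (mul_pos (mul_pos (hden x hx 0) (hden x hx 1)) (hden x hx 2)) (hden x hx 3)
  -- g tends to atTop at t from the right
  have hIoo_mem : Set.Ioo t m ∈ 𝓝[>] t := Ioo_mem_nhdsGT_of_mem ⟨le_refl t, htm⟩
  have hden_lim : Tendsto (denf T) (𝓝[>] t) (𝓝[>] (0:ℝ)) := by
    rw [tendsto_nhdsWithin_iff]
    constructor
    · have := (denf_continuous T).tendsto t
      rw [hdenT] at this
      exact this.mono_left nhdsWithin_le_nhds
    · filter_upwards [hIoo_mem] with x hx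
      exact hdenpos x ⟨hx.1, hx.2.le⟩
  have hinv : Tendsto (fun x => (denf T x)⁻¹) (𝓝[>] t) atTop :=
    tendsto_inv_nhdsGT_zero.comp hden_lim
  have hnum_lim : Tendsto (numf Q) (𝓝[>] t) (𝓝 (numf Q t)) :=
    ((numf_continuous Q).tendsto t).mono_left nhdsWithin_le_nhds
  have hg_lim : Tendsto (gfun T Q) (𝓝[>] t) atTop := by
    have h := Filter.Tendsto.pos_mul_atTop hnumT hnum_lim hinv
    refine h.congr fun x => ?_
    rw [gfun_eq, div_eq_mul_inv]
  obtain ⟨x₁, hx₁mem, hx₁gt⟩ : ∃ x, x ∈ Set.Ioo t m ∧ 1 < gfun T Q x :=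
    ((Filter.eventually_mem_set.2 hIoo_mem).and (hg_lim.eventually_gt_atTop 1)).exists
  -- g m = 0
  have hgm : gfun T Q m = 0 := by
    rw [gfun_eq]
    rcases hm0 with h | ⟨k, h⟩
    · have h0 : Real.sin (2 * Real.pi - m) = 0 := by rw [← h, sub_self, Real.sin_zero]
      simp [numf, h0]
    · have h0 : Real.sin (Q k - m) = 0 := by rw [← h, sub_self, Real.sin_zero]
      have hcase : k = 0 ∨ k = 1 ∨ k = 2 := by omega
      rcases hcase with h' | h' | h' <;> rw [h'] at h0 <;> simp [numf, h0]
  -- continuity on [x₁, m]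
  have hsub : Set.Icc x₁ m ⊆ Set.Ioc t m := fun x hx =>
    ⟨lt_of_lt_of_le hx₁mem.1 hx.1, hx.2⟩
  have hcont : ContinuousOn (gfun T Q) (Set.Icc x₁ m) := by
    have hc : ContinuousOn (fun x => numf Q x / denf T x) (Set.Icc x₁ m) :=
      ContinuousOn.div (numf_continuous Q).continuousOn (denf_continuous T).continuousOn
        (fun x hx => (hdenpos x (hsub hx)).ne')
    exact hc.congr fun x _ => gfun_eq T Q x
  have key := intermediate_value_Icc' hx₁mem.2.le hcont
  have h1mem : (1:ℝ) ∈ Set.Icc (gfun T Q m) (gfun T Q x₁) :=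
    ⟨by rw [hgm]; norm_num, hx₁gt.le⟩
  obtain ⟨z, hz, hgz⟩ := key h1mem
  have hzmem : z ∈ Set.Ioo t m := by
    refine ⟨lt_of_lt_of_le hx₁mem.1 hz.1, lt_of_le_of_ne hz.2 fun h => ?_⟩
    rw [h, hgm] at hgz; norm_num at hgz
  refine ⟨z, ⟨hzmem, hgz⟩, ?_⟩
  rintro y ⟨hy, hgy⟩
  exact hanti.injOn hy hzmem (by rw [hgy, hgz])
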